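/- Let A be an n×n real symmetric matrix and let L denote the linear map on n×n real symmetric matrices given by L(Y) = (A²Y + YA²)/2. Then for every positive integer k and every n×n real symmetric matrix X, the matrix A^k X A^k is majorized by L^k(X) (the k-fold iterate of L applied to X). -/

import Mathlib

/-!
In an eigenbasis `(e_a)` of `A`, with eigenvalues `d_a`, the matrix `Aᵏ X Aᵏ` has entries
`(d_a d_b)ᵏ X_ab` and `Lᵏ X` has entries `((d_a² + d_b²) / 2)ᵏ X_ab`, so
`Aᵏ X Aᵏ = S ⊙ Lᵏ X` with `S_ab = ρ(d_a, d_b)ᵏ`, `ρ(x, y) = 2xy / (x² + y²)`. The matrix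
`(ρ(d_a, d_b))` is positive semidefinite (a geometric-series kernel after a Cayley substitution),
hence so is its Hadamard power `S` (Schur), and `S` has unit diagonal.

Hadamard multiplication by such an `S` produces majorization: if `P` is the spectral projection
of `S ⊙ N` onto `m` eigenvectors, then the sum of those eigenvalues is
`tr (P (S ⊙ N)) = tr ((S ⊙ P) N)`, and `0 ≤ S ⊙ P ≤ 1` with trace `m`, so in an eigenbasis of
`N` this is a `[0, 1]`-weighted sum of eigenvalues of `N` with total weight `m`, which is at most
the sum of the `m` largest ones.
-/

open Matrix

/-- `v` is majorized by `w`: for every `k`, the sum of the `k` largest entries of `v`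
is at most the sum of the `k` largest entries of `w`, with equality for `k = n`.
Stated equivalently: every subset sum of `v` is dominated by some subset sum of `w`
of the same cardinality, and the total sums agree. -/
def VecMajorizedBy {ι : Type*} [Fintype ι] (v w : ι → ℝ) : Prop :=
  (∀ s : Finset ι, ∃ t : Finset ι, t.card = s.card ∧ ∑ i ∈ s, v i ≤ ∑ i ∈ t, w i) ∧
    ∑ i, v i = ∑ i, w i

/-- `X` is majorized by `Y`: both are (real) symmetric and the eigenvalue vector of `X`
is majorized by the eigenvalue vector of `Y`. -/
def MatMajorizedBy {ι : Type*} [Fintype ι] [DecidableEq ι]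
    (X Y : Matrix ι ι ℝ) : Prop :=
  ∃ (hX : X.IsHermitian) (hY : Y.IsHermitian),
    VecMajorizedBy hX.eigenvalues hY.eigenvalues

open Finset

section Relaxation

variable {ι : Type*} [Fintype ι]

theorem Finset.exists_card_eq_forall_mem_forall_notMem_le (μ : ι → ℝ) {m : ℕ}
    (hm : m ≤ Fintype.card ι) : ∃ T : Finset ι, #T = m ∧ ∀ i ∈ T, ∀ j ∉ T, μ j ≤ μ i := by
  classical
  obtain ⟨T, hT, hmax⟩ := (powersetCard m (univ : Finset ι)).exists_max_image
    (fun T => ∑ i ∈ T, μ i) (powersetCard_nonempty.mpr (by simpa using hm))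
  rw [mem_powersetCard_univ] at hT
  refine ⟨T, hT, fun i hi j hj => ?_⟩
  have hj' : j ∉ T.erase i := fun h => hj (mem_of_mem_erase h)
  have hswap := hmax (insert j (T.erase i)) <| by
    rw [mem_powersetCard_univ, card_insert_of_notMem hj', card_erase_of_mem hi,
      Nat.sub_add_cancel (card_pos.mpr ⟨i, hi⟩), hT]
  rw [sum_insert hj', ← add_sum_erase T μ hi] at hswap
  linarith

theorem sum_mul_le_sum_of_forall_mem_forall_notMem_le (μ q : ι → ℝ) (T : Finset ι)
    (hμ : ∀ i ∈ T, ∀ j ∉ T, μ j ≤ μ i) (hq0 : ∀ i, 0 ≤ q i) (hq1 : ∀ i, q i ≤ 1)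
    (hq : ∑ i, q i = #T) : ∑ i, μ i * q i ≤ ∑ i ∈ T, μ i := by
  classical
  rcases T.eq_empty_or_nonempty with rfl | hT
  · have hq_zero : ∀ i, q i = 0 := by
      simpa [sum_eq_zero_iff_of_nonneg fun i _ => hq0 i] using hq
    simp [hq_zero]
  obtain ⟨i₀, hi₀, hmin⟩ := T.exists_min_image μ hT
  -- `μ i₀` separates the values of `μ` on `T` from those off `T`
  have hterm : ∀ i, (μ i - μ i₀) * (q i - if i ∈ T then 1 else 0) ≤ 0 := fun i => by
    by_cases hi : i ∈ T
    · simp only [hi, if_true]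
      exact mul_nonpos_of_nonneg_of_nonpos (sub_nonneg.2 (hmin i hi)) (sub_nonpos.2 (hq1 i))
    · simp only [hi, if_false, sub_zero]
      exact mul_nonpos_of_nonpos_of_nonneg (sub_nonpos.2 (hμ i₀ hi₀ i hi)) (hq0 i)
  have hexpand : ∑ i, (μ i - μ i₀) * (q i - if i ∈ T then 1 else 0)
      = ∑ i, μ i * q i - ∑ i ∈ T, μ i := by
    simp only [sub_mul, mul_sub, mul_ite, mul_one, mul_zero, sum_sub_distrib, ← mul_sum,
      sum_ite_mem, univ_inter, hq, sum_const, nsmul_eq_mul]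
    ring
  linarith [sum_nonpos fun i (_ : i ∈ univ) => hterm i]

theorem exists_card_eq_sum_mul_le_sum (μ q : ι → ℝ) (m : ℕ) (hq0 : ∀ i, 0 ≤ q i)
    (hq1 : ∀ i, q i ≤ 1) (hq : ∑ i, q i = m) :
    ∃ t : Finset ι, #t = m ∧ ∑ i, μ i * q i ≤ ∑ i ∈ t, μ i := by
  have hm : (m : ℝ) ≤ Fintype.card ι := by
    simpa [← hq] using sum_le_sum fun i (_ : i ∈ univ) => hq1 i
  obtain ⟨T, hT, hμ⟩ := exists_card_eq_forall_mem_forall_notMem_le μ (by exact_mod_cast hm)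
  exact ⟨T, hT, sum_mul_le_sum_of_forall_mem_forall_notMem_le μ q T hμ hq0 hq1 (hT ▸ hq)⟩

end Relaxation

namespace Matrix

open Unitary
open scoped ComplexOrder

variable {ι 𝕜 : Type*} [Fintype ι] [RCLike 𝕜]

theorem trace_mul_hadamard {α : Type*} [CommSemiring α] (P S N : Matrix ι ι α) :
    (P * (S ⊙ N)).trace = ((Sᵀ ⊙ P) * N).trace := by
  simp only [trace, diag, mul_apply, hadamard_apply, transpose_apply, mul_assoc, mul_left_comm]

theorem trace_hadamard_of_diag_eq_one {α : Type*} [NonAssocSemiring α] {S : Matrix ι ι α}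
    (hS : S.diag = 1) (P : Matrix ι ι α) : (S ⊙ P).trace = P.trace := by
  refine sum_congr rfl fun i _ => ?_
  change S i i * P i i = P i i
  rw [← diag_apply S, hS, Pi.one_apply, one_mul]

theorem posSemidef_of_hasSum {β : Type*} {f : β → Matrix ι ι ℝ} {K : Matrix ι ι ℝ}
    (hf : ∀ m, (f m).PosSemidef) (hK : HasSum f K) : K.PosSemidef := by
  refine PosSemidef.of_dotProduct_mulVec_nonneg ?_ fun x => ?_
  · exact hK.matrix_conjTranspose.unique (by simpa only [(hf _).isHermitian.eq] using hK)
  · have hx : HasSum (fun m => star x ⬝ᵥ f m *ᵥ x) (star x ⬝ᵥ K *ᵥ x) := by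
      simp only [dotProduct, mulVec, mul_sum]
      exact hasSum_sum fun a _ => hasSum_sum fun b _ =>
        ((Pi.hasSum.1 (Pi.hasSum.1 hK a) b).mul_right _).mul_left _
    exact hx.nonneg fun m => (hf m).dotProduct_mulVec_nonneg x

theorem posSemidef_of_mul_div_one_sub_mul (g u : ι → ℝ) (h : ∀ i, g i ≠ 0 → |u i| < 1) :
    (of fun a b => g a * g b / (1 - u a * u b)).PosSemidef := by
  refine posSemidef_of_hasSum (f := fun m => vecMulVec (g * u ^ m) (g * u ^ m))
    (fun m => by simpa using posSemidef_vecMulVec_self_star (g * u ^ m)) ?_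
  refine Pi.hasSum.2 fun a => Pi.hasSum.2 fun b => ?_
  simp only [vecMulVec_apply, of_apply, Pi.mul_apply, Pi.pow_apply]
  by_cases hab : g a = 0 ∨ g b = 0
  · rcases hab with h0 | h0 <;> simp [h0, hasSum_zero]
  push Not at hab
  have huab : |u a * u b| < 1 := by
    rw [abs_mul]
    exact mul_lt_one_of_nonneg_of_lt_one_left (abs_nonneg _) (h a hab.1) (h b hab.2).le
  have hterm : (fun m => g a * u a ^ m * (g b * u b ^ m)) =
      fun m => g a * g b * (u a * u b) ^ m := by
    ext m; ring
  rw [hterm, div_eq_mul_inv]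
  exact (hasSum_geometric_of_abs_lt_one huab).mul_left (g a * g b)

theorem PosSemidef.map_pow {A : Matrix ι ι 𝕜} (hA : A.PosSemidef) (k : ℕ) :
    (A.map (· ^ k)).PosSemidef := by
  induction k with
  | zero =>
    convert posSemidef_vecMulVec_self_star (1 : ι → 𝕜) using 1
    ext; simp [vecMulVec]
  | succ k ih =>
    convert ih.hadamard hA using 1
    ext; simp [hadamard_apply, pow_succ]

variable [DecidableEq ι]

theorem diagonal_mul_mul_diagonal {α : Type*} [CommSemiring α] (d e : ι → α)
    (Y : Matrix ι ι α) : diagonal d * Y * diagonal e = of (fun a b => d a * e b) ⊙ Y := by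
  ext
  simp only [mul_diagonal, diagonal_mul, hadamard_apply, of_apply]
  ring

theorem trace_conjStarAlgAut (u : unitaryGroup ι 𝕜) (x : Matrix ι ι 𝕜) :
    (conjStarAlgAut 𝕜 _ u x).trace = x.trace := by
  rw [conjStarAlgAut_apply, trace_mul_cycle, coe_star_mul_self, one_mul]

theorem PosSemidef.conjStarAlgAut {x : Matrix ι ι 𝕜} (hx : x.PosSemidef)
    (u : unitaryGroup ι 𝕜) : (conjStarAlgAut 𝕜 _ u x).PosSemidef :=
  hx.mul_mul_conjTranspose_same (u : Matrix ι ι 𝕜)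

theorem IsHermitian.of_conjStarAlgAut {x : Matrix ι ι 𝕜} (u : unitaryGroup ι 𝕜)
    (hux : (conjStarAlgAut 𝕜 _ u x).IsHermitian) : x.IsHermitian := by
  have := IsSelfAdjoint.map hux (conjStarAlgAut 𝕜 _ u).symm
  rwa [StarAlgEquiv.symm_apply_apply] at this

theorem IsHermitian.eigenvalues_conjStarAlgAut {x : Matrix ι ι 𝕜} (hx : x.IsHermitian)
    (u : unitaryGroup ι 𝕜) (hux : (conjStarAlgAut 𝕜 _ u x).IsHermitian) :
    hux.eigenvalues = hx.eigenvalues := by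
  rw [hux.eigenvalues_eq_eigenvalues_iff, conjStarAlgAut_apply, charpoly_mul_comm, ← mul_assoc,
    coe_star_mul_self, one_mul]

theorem IsHermitian.exists_trace_mul_eq_sum_eigenvalues {M : Matrix ι ι ℝ} (hM : M.IsHermitian)
    (s : Finset ι) : ∃ P : Matrix ι ι ℝ, P.PosSemidef ∧ (1 - P).PosSemidef ∧ P.trace = #s ∧
      (P * M).trace = ∑ i ∈ s, hM.eigenvalues i := by
  set φ := conjStarAlgAut ℝ _ hM.eigenvectorUnitary
  have hφ : M = φ (diagonal hM.eigenvalues) := by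
    simpa [-conjStarAlgAut_apply] using hM.spectral_theorem
  set e : ι → ℝ := fun i => if i ∈ s then 1 else 0
  have he0 : ∀ i, 0 ≤ e i := fun i => by by_cases hi : i ∈ s <;> simp [e, hi]
  have he1 : ∀ i, 0 ≤ 1 - e i := fun i => by by_cases hi : i ∈ s <;> simp [e, hi]
  refine ⟨φ (diagonal e), (posSemidef_diagonal_iff.2 he0).conjStarAlgAut _, ?_, ?_, ?_⟩
  · rw [← map_one φ, ← map_sub, ← diagonal_one, diagonal_sub]
    exact (posSemidef_diagonal_iff.2 he1).conjStarAlgAut _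
  · simp [φ, e, -conjStarAlgAut_apply]
  · conv_lhs => rw [hφ]
    rw [← map_mul, trace_conjStarAlgAut, diagonal_mul_diagonal, trace_diagonal]
    simp [e]

theorem IsHermitian.exists_card_eq_trace_mul_le {N Q : Matrix ι ι ℝ} (hN : N.IsHermitian)
    (hQ : Q.PosSemidef) (hQ1 : (1 - Q).PosSemidef) {m : ℕ} (hm : Q.trace = m) :
    ∃ t : Finset ι, #t = m ∧ (Q * N).trace ≤ ∑ i ∈ t, hN.eigenvalues i := by
  set u := star hN.eigenvectorUnitary
  set ψ := conjStarAlgAut ℝ _ u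
  have hψ : ψ N = diagonal hN.eigenvalues := by
    simpa [-conjStarAlgAut_apply] using hN.conjStarAlgAut_star_eigenvectorUnitary
  have htrace : (Q * N).trace = ∑ i, hN.eigenvalues i * ψ Q i i := by
    rw [← trace_conjStarAlgAut u, map_mul, hψ]
    simp only [trace, diag, mul_diagonal, mul_comm]
    rfl
  rw [htrace]
  refine exists_card_eq_sum_mul_le_sum _ _ m (fun i => (hQ.conjStarAlgAut u).diag_nonneg)
    (fun i => ?_) ?_
  · simpa [ψ, -conjStarAlgAut_apply] using (hQ1.conjStarAlgAut u).diag_nonneg (i := i)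
  · rw [← hm, ← trace_conjStarAlgAut u Q]
    rfl

end Matrix

section Majorization

variable {ι : Type*} [Fintype ι] [DecidableEq ι]

theorem MatMajorizedBy.of_conjStarAlgAut {M N : Matrix ι ι ℝ} (u : unitaryGroup ι ℝ)
    (h : MatMajorizedBy (Unitary.conjStarAlgAut ℝ _ u M) (Unitary.conjStarAlgAut ℝ _ u N)) :
    MatMajorizedBy M N := by
  obtain ⟨huM, huN, hmaj⟩ := h
  have hM := IsHermitian.of_conjStarAlgAut u huM
  have hN := IsHermitian.of_conjStarAlgAut u huN
  refine ⟨hM, hN, ?_⟩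
  rwa [hM.eigenvalues_conjStarAlgAut u huM, hN.eigenvalues_conjStarAlgAut u huN] at hmaj

theorem matMajorizedBy_hadamard {S N : Matrix ι ι ℝ} (hS : S.PosSemidef) (hSdiag : S.diag = 1)
    (hN : N.IsHermitian) : MatMajorizedBy (S ⊙ N) N := by
  have hSN : (S ⊙ N).IsHermitian := hS.isHermitian.hadamard hN
  refine ⟨hSN, hN, fun s => ?_, ?_⟩
  · obtain ⟨P, hP, hP1, hPtr, hPM⟩ := hSN.exists_trace_mul_eq_sum_eigenvalues s
    have hSsymm : Sᵀ = S := by simpa using hS.isHermitian.eq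
    have hSP1 : S ⊙ (1 - P) = 1 - S ⊙ P := by
      calc S ⊙ (1 - P) = S ⊙ 1 - S ⊙ P := by ext; simp [hadamard_apply, mul_sub]
        _ = 1 - S ⊙ P := by rw [hadamard_one_eq_one_iff.2 hSdiag]
    obtain ⟨t, ht, hle⟩ := hN.exists_card_eq_trace_mul_le (hS.hadamard hP)
      (hSP1 ▸ hS.hadamard hP1) (by rw [trace_hadamard_of_diag_eq_one hSdiag, hPtr])
    refine ⟨t, ht, ?_⟩
    calc ∑ i ∈ s, hSN.eigenvalues i = (P * (S ⊙ N)).trace := hPM.symm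
      _ = ((S ⊙ P) * N).trace := by rw [trace_mul_hadamard, hSsymm]
      _ ≤ ∑ i ∈ t, hN.eigenvalues i := hle
  · have hSNtr := hSN.trace_eq_sum_eigenvalues
    have hNtr := hN.trace_eq_sum_eigenvalues
    simp only [RCLike.ofReal_real_eq_id, id] at hSNtr hNtr
    rw [← hSNtr, ← hNtr, trace_hadamard_of_diag_eq_one hSdiag]

end Majorization

/-- The ratio of the eigenbasis symbols `x * y` of `P_A` and `(x² + y²) / 2` of `L_{A²}`,
set to `1` at the origin so that its matrices have unit diagonal. -/
noncomputable def lyapunovRatio (x y : ℝ) : ℝ :=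
  if x = 0 ∧ y = 0 then 1 else 2 * x * y / (x ^ 2 + y ^ 2)

theorem lyapunovRatio_mul (x y : ℝ) : lyapunovRatio x y * ((x ^ 2 + y ^ 2) / 2) = x * y := by
  unfold lyapunovRatio
  split_ifs with h
  · simp [h.1, h.2]
  · have : x ^ 2 + y ^ 2 ≠ 0 := by
      contrapose! h
      exact ⟨by nlinarith [sq_nonneg y], by nlinarith [sq_nonneg x]⟩
    field_simp

theorem lyapunovRatio_self (x : ℝ) : lyapunovRatio x x = 1 := by
  unfold lyapunovRatio
  split_ifs with h
  · rfl
  · have : x ≠ 0 := by tauto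
    field_simp
    ring

/-- The Cayley-type substitution `u = (1 - x²) / (1 + x²)`, `g = 2x / (1 + x²)` turns the ratio
into the geometric kernel `g_x g_y / (1 - u_x u_y)`, plus a rank-one correction at the origin. -/
theorem lyapunovRatio_eq (x y : ℝ) :
    lyapunovRatio x y = 2 * x / (1 + x ^ 2) * (2 * y / (1 + y ^ 2)) /
        (1 - (1 - x ^ 2) / (1 + x ^ 2) * ((1 - y ^ 2) / (1 + y ^ 2))) +
      (if x = 0 then 1 else 0) * (if y = 0 then 1 else 0) := by
  unfold lyapunovRatio
  rcases eq_or_ne x 0 with rfl | hx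
  · rcases eq_or_ne y 0 with rfl | hy <;> simp [*]
  rcases eq_or_ne y 0 with rfl | hy
  · simp [hx]
  have hx2 : 0 < x ^ 2 := by positivity
  have hy2 : 0 < y ^ 2 := by positivity
  have hden : 1 - (1 - x ^ 2) / (1 + x ^ 2) * ((1 - y ^ 2) / (1 + y ^ 2)) =
      2 * (x ^ 2 + y ^ 2) / ((1 + x ^ 2) * (1 + y ^ 2)) := by
    field_simp
    ring
  simp only [hx, hy, and_self, if_false, mul_zero, add_zero, hden]
  field_simp

theorem posSemidef_lyapunovRatio {ι : Type*} [Fintype ι] (d : ι → ℝ) :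
    (of fun a b => lyapunovRatio (d a) (d b)).PosSemidef := by
  set g : ι → ℝ := fun i => 2 * d i / (1 + d i ^ 2)
  set u : ι → ℝ := fun i => (1 - d i ^ 2) / (1 + d i ^ 2)
  set z : ι → ℝ := fun i => if d i = 0 then 1 else 0
  have hu : ∀ i, g i ≠ 0 → |u i| < 1 := fun i hg => by
    have hd : d i ≠ 0 := by rintro h; simp [g, h] at hg
    have : 0 < d i ^ 2 := by positivity
    rw [abs_div, abs_of_pos (by positivity : (0 : ℝ) < 1 + d i ^ 2), div_lt_one (by positivity),
      abs_lt]
    constructor <;> linarith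
  have hsplit : (of fun a b => lyapunovRatio (d a) (d b)) =
      (of fun a b => g a * g b / (1 - u a * u b)) + vecMulVec z z := by
    ext a b
    simp only [lyapunovRatio_eq, g, u, z, of_apply, Matrix.add_apply, vecMulVec_apply]
  rw [hsplit]
  exact (posSemidef_of_mul_div_one_sub_mul g u hu).add
    (by simpa using posSemidef_vecMulVec_self_star z)

theorem iterate_lyapunov_diagonal {ι : Type*} [Fintype ι] [DecidableEq ι] (d : ι → ℝ) (k : ℕ)
    (Y : Matrix ι ι ℝ) :
    (fun Z => (2 : ℝ)⁻¹ • (diagonal d ^ 2 * Z + Z * diagonal d ^ 2))^[k] Y =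
      (of fun a b => (d a ^ 2 + d b ^ 2) / 2).map (· ^ k) ⊙ Y := by
  induction k with
  | zero => ext; simp [hadamard_apply]
  | succ k ih =>
    rw [Function.iterate_succ_apply', ih]
    ext
    simp only [pow_succ, pow_zero, one_mul, diagonal_mul_diagonal, Matrix.smul_apply,
      Matrix.add_apply, diagonal_mul, hadamard_apply, map_apply, of_apply, mul_diagonal,
      smul_eq_mul]
    ring

theorem pow_quadratic_majorized_iterate_lyapunov_general {n : ℕ}
    (A : Matrix (Fin n) (Fin n) ℝ) (hA : A.IsHermitian)
    (k : ℕ) (X : Matrix (Fin n) (Fin n) ℝ) (hX : X.IsHermitian) :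
    MatMajorizedBy (A ^ k * X * A ^ k)
      ((fun Y => (2 : ℝ)⁻¹ • (A ^ 2 * Y + Y * A ^ 2))^[k] X) := by
  set d := hA.eigenvalues
  set φ := Unitary.conjStarAlgAut ℝ _ (star hA.eigenvectorUnitary)
  have hφA : φ A = diagonal d := by
    simpa [-Unitary.conjStarAlgAut_apply] using hA.conjStarAlgAut_star_eigenvectorUnitary
  have hφL : Function.Semiconj φ (fun Y => (2 : ℝ)⁻¹ • (A ^ 2 * Y + Y * A ^ 2))
      (fun Z => (2 : ℝ)⁻¹ • (diagonal d ^ 2 * Z + Z * diagonal d ^ 2)) := fun Y => by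
    simp only [map_smul, map_add, map_mul, map_pow, hφA]
  apply MatMajorizedBy.of_conjStarAlgAut (star hA.eigenvectorUnitary)
  rw [(hφL.iterate_right k).eq, iterate_lyapunov_diagonal, map_mul, map_mul, map_pow, hφA,
    diagonal_pow, diagonal_mul_mul_diagonal]
  have hsplit : of (fun a b => (d ^ k) a * (d ^ k) b) =
      (of fun a b => lyapunovRatio (d a) (d b)).map (· ^ k) ⊙
        (of fun a b => (d a ^ 2 + d b ^ 2) / 2).map (· ^ k) := by
    ext; simp [hadamard_apply, ← mul_pow, lyapunovRatio_mul]
  rw [hsplit, hadamard_assoc]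
  refine matMajorizedBy_hadamard ((posSemidef_lyapunovRatio d).map_pow k)
    (by ext; simp [lyapunovRatio_self]) (IsHermitian.hadamard ?_ (IsSelfAdjoint.map hX φ))
  ext; simp [add_comm]

/-- For real symmetric `A`, `X` and `L Y = (A²Y + YA²)/2`, the matrix `Aᵏ * X * Aᵏ` is
majorized by the k-fold iterate `L^[k] X`, for every positive integer `k`. -/
theorem pow_quadratic_majorized_iterate_lyapunov {n : ℕ}
    (A : Matrix (Fin n) (Fin n) ℝ) (hA : A.IsHermitian)
    (k : ℕ) (hk : 0 < k) (X : Matrix (Fin n) (Fin n) ℝ) (hX : X.IsHermitian) :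
    MatMajorizedBy (A ^ k * X * A ^ k)
      ((fun Y => (2 : ℝ)⁻¹ • (A ^ 2 * Y + Y * A ^ 2))^[k] X) :=
  pow_quadratic_majorized_iterate_lyapunov_general A hA k X hX
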